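/- arXiv:2011.02778 — 4 statements merged into one kernel-verified Lean document; each statement's English description precedes it below -/
import Mathlib

section
/- If Q₁, Q₂ are orthogonal projections with nonzero ranges 𝔔₁, 𝔔₂, and φ(𝔔₁,𝔔₂) ∈ [0,π/2] is defined by sin φ(𝔔₁,𝔔₂) = sup_{x∈𝔔₁, ‖x‖=1} dist(x, 𝔔₂), then arcsin(‖Q₁ − Q₂‖) = max{φ(𝔔₁,𝔔₂), φ(𝔔₂,𝔔₁)}. -/
/-!
Write `P₁, P₂` for the orthogonal projections. The distance from `x ∈ 𝔔₁` to `𝔔₂` is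
`‖(1 - P₂) x‖`, so `sin φ(𝔔₁,𝔔₂) = ‖(1 - P₂) P₁‖`. For any vector,
`(P₁ - P₂) x = P₁ (1 - P₂) x + (1 - P₁) (-P₂ x)` is an orthogonal sum, and since
`‖P₁ (1 - P₂)‖ = ‖((1 - P₂) P₁)*‖`, Pythagoras bounds `‖(P₁ - P₂) x‖` by
`max ‖(1 - P₂) P₁‖ ‖(1 - P₁) P₂‖ * ‖x‖`; conversely `(1 - P₂) P₁ = (P₁ - P₂) P₁`. Hence
`‖P₁ - P₂‖ = max (sin φ(𝔔₁,𝔔₂)) (sin φ(𝔔₂,𝔔₁))`, and `arcsin` commutes with this maximum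
because `sin` is monotone on `[0, π/2]`.
-/

open Real ContinuousLinearMap

open scoped InnerProductSpace

namespace IsStarProjection

variable {𝕜 E : Type*} [RCLike 𝕜] [NormedAddCommGroup E] [InnerProductSpace 𝕜 E]
  [CompleteSpace E] {p q : E →L[𝕜] E}

lemma inner_apply_one_sub_apply (hp : IsStarProjection p) (x y : E) :
    ⟪p x, (1 - p) y⟫_𝕜 = 0 :=
  calc ⟪p x, (1 - p) y⟫_𝕜 = ⟪x, (p * (1 - p)) y⟫_𝕜 := hp.isSelfAdjoint.isSymmetric x _
    _ = 0 := by rw [hp.mul_one_sub_self, zero_apply, inner_zero_right]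

lemma norm_apply_add_one_sub_apply_sq (hp : IsStarProjection p) (x y : E) :
    ‖p x + (1 - p) y‖ ^ 2 = ‖p x‖ ^ 2 + ‖(1 - p) y‖ ^ 2 := by
  simpa only [sq] using
    norm_add_sq_eq_norm_sq_add_norm_sq_of_inner_eq_zero _ _ (hp.inner_apply_one_sub_apply x y)

lemma norm_sq_eq_norm_apply_sq_add (hp : IsStarProjection p) (x : E) :
    ‖x‖ ^ 2 = ‖p x‖ ^ 2 + ‖(1 - p) x‖ ^ 2 := by
  rw [← hp.norm_apply_add_one_sub_apply_sq, sub_apply, one_apply_eq_self, add_sub_cancel]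

lemma norm_mul_one_sub_eq_norm_one_sub_mul (hp : IsStarProjection p) (hq : IsStarProjection q) :
    ‖p * (1 - q)‖ = ‖(1 - q) * p‖ := by
  rw [← norm_star, star_mul, hp.isSelfAdjoint.star_eq, hq.one_sub.isSelfAdjoint.star_eq]

lemma norm_sub_eq_max (hp : IsStarProjection p) (hq : IsStarProjection q) :
    ‖p - q‖ = max ‖(1 - q) * p‖ ‖(1 - p) * q‖ := by
  refine le_antisymm ?_ (max_le ?_ ?_)
  · set m := max ‖(1 - q) * p‖ ‖(1 - p) * q‖
    refine opNorm_le_bound _ (by positivity) fun x => ?_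
    have hsplit : (p - q) x = p ((1 - q) x) + (1 - p) (-q x) := by
      simp only [sub_apply, one_apply_eq_self, map_sub, map_neg]
      abel
    have ha : ‖p ((1 - q) x)‖ ≤ m * ‖(1 - q) x‖ :=
      calc ‖p ((1 - q) x)‖ = ‖(p * (1 - q)) ((1 - q) x)‖ := by
            rw [mul_apply_eq_comp, ← mul_apply_eq_comp (1 - q), hq.one_sub.isIdempotentElem.eq]
        _ ≤ ‖p * (1 - q)‖ * ‖(1 - q) x‖ := le_opNorm _ _
        _ ≤ m * ‖(1 - q) x‖ := by
            rw [hp.norm_mul_one_sub_eq_norm_one_sub_mul hq]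
            gcongr
            exact le_max_left _ _
    have hb : ‖(1 - p) (-q x)‖ ≤ m * ‖q x‖ :=
      calc ‖(1 - p) (-q x)‖ = ‖((1 - p) * q) (q x)‖ := by
            rw [map_neg, norm_neg, mul_apply_eq_comp, ← mul_apply_eq_comp q, hq.isIdempotentElem.eq]
        _ ≤ ‖(1 - p) * q‖ * ‖q x‖ := le_opNorm _ _
        _ ≤ m * ‖q x‖ := by gcongr; exact le_max_right _ _
    have hsq : ‖(p - q) x‖ ^ 2 ≤ (m * ‖x‖) ^ 2 :=
      calc ‖(p - q) x‖ ^ 2 = ‖p ((1 - q) x)‖ ^ 2 + ‖(1 - p) (-q x)‖ ^ 2 := by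
            rw [hsplit, hp.norm_apply_add_one_sub_apply_sq]
        _ ≤ (m * ‖(1 - q) x‖) ^ 2 + (m * ‖q x‖) ^ 2 := by gcongr
        _ = (m * ‖x‖) ^ 2 := by rw [mul_pow m ‖x‖, hq.norm_sq_eq_norm_apply_sq_add x]; ring
    exact (pow_le_pow_iff_left₀ (norm_nonneg _) (by positivity) two_ne_zero).1 hsq
  · calc ‖(1 - q) * p‖ = ‖(p - q) * p‖ := by rw [sub_mul, sub_mul, one_mul, hp.isIdempotentElem.eq]
      _ ≤ ‖p - q‖ * ‖p‖ := norm_mul_le _ _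
      _ ≤ ‖p - q‖ := mul_le_of_le_one_right (norm_nonneg _) hp.norm_le
  · calc ‖(1 - p) * q‖ = ‖(q - p) * q‖ := by rw [sub_mul, sub_mul, one_mul, hq.isIdempotentElem.eq]
      _ ≤ ‖q - p‖ * ‖q‖ := norm_mul_le _ _
      _ ≤ ‖p - q‖ := by rw [norm_sub_rev]; exact mul_le_of_le_one_right (norm_nonneg _) hq.norm_le

end IsStarProjection

namespace Submodule

variable {𝕜 E F : Type*} [RCLike 𝕜] [NormedAddCommGroup E] [InnerProductSpace 𝕜 E]
  [SeminormedAddCommGroup F] [NormedSpace 𝕜 F] (K : Submodule 𝕜 E) [K.HasOrthogonalProjection]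

lemma infDist_eq_norm_starProjection_orthogonal (x : E) :
    Metric.infDist x K = ‖Kᗮ.starProjection x‖ := by
  rw [starProjection_orthogonal_val, starProjection_minimal, Metric.infDist_eq_iInf]
  simp_rw [dist_eq_norm]
  rfl

lemma norm_comp_starProjection (T : E →L[𝕜] F) :
    ‖T ∘L K.starProjection‖ = ‖T ∘L K.subtypeL‖ := by
  refine le_antisymm ?_ ?_
  · calc ‖T ∘L K.starProjection‖ = ‖(T ∘L K.subtypeL) ∘L K.orthogonalProjectionOnto‖ := rfl
      _ ≤ ‖T ∘L K.subtypeL‖ * ‖K.orthogonalProjectionOnto‖ := opNorm_comp_le _ _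
      _ ≤ ‖T ∘L K.subtypeL‖ :=
        mul_le_of_le_one_right (norm_nonneg _) K.orthogonalProjectionOnto_norm_le
  · have hι : K.starProjection ∘L K.subtypeL = K.subtypeL := by
      ext v
      exact starProjection_mem_subspace_eq_self v
    calc ‖T ∘L K.subtypeL‖ = ‖(T ∘L K.starProjection) ∘L K.subtypeL‖ := by rw [comp_assoc, hι]
      _ ≤ ‖T ∘L K.starProjection‖ * ‖K.subtypeL‖ := opNorm_comp_le _ _
      _ ≤ ‖T ∘L K.starProjection‖ := mul_le_of_le_one_right (norm_nonneg _) K.norm_subtypeL_le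

lemma sSup_norm_apply_unit_eq_norm_comp_starProjection (T : E →L[𝕜] F) :
    sSup ((fun x => ‖T x‖) '' {x | x ∈ K ∧ ‖x‖ = 1}) = ‖T ∘L K.starProjection‖ := by
  rw [norm_comp_starProjection, ← sSup_sphere_eq_norm]
  congr 1
  ext r
  simp only [Set.mem_image, mem_sphere_zero_iff_norm, Subtype.exists, comp_apply,
    subtypeL_apply, coe_norm]
  exact ⟨fun ⟨x, ⟨hxK, hx⟩, hr⟩ => ⟨x, hxK, hx, hr⟩, fun ⟨x, hxK, hx, hr⟩ => ⟨x, ⟨hxK, hx⟩, hr⟩⟩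

lemma sSup_infDist_eq_norm_one_sub_starProjection_mul (L : Submodule 𝕜 E)
    [L.HasOrthogonalProjection] :
    sSup ((fun x => Metric.infDist x (L : Set E)) '' {x | x ∈ K ∧ ‖x‖ = 1}) =
      ‖(1 - L.starProjection) * K.starProjection‖ := by
  simp_rw [L.infDist_eq_norm_starProjection_orthogonal,
    K.sSup_norm_apply_unit_eq_norm_comp_starProjection, L.starProjection_orthogonal']
  rfl

end Submodule

lemma Real.arcsin_max_sin {a b : ℝ} (ha : a ∈ Set.Icc (-(π / 2)) (π / 2))
    (hb : b ∈ Set.Icc (-(π / 2)) (π / 2)) : arcsin (max (sin a) (sin b)) = max a b := by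
  rw [← strictMonoOn_sin.monotoneOn.map_max ha hb, arcsin_sin' ⟨?_, ?_⟩]
  · exact ha.1.trans (le_max_left _ _)
  · exact max_le ha.2 hb.2

theorem maximal_angle_eq_max_relative_angles_general {E : Type*} [NormedAddCommGroup E]
    [InnerProductSpace ℂ E] [CompleteSpace E]
    (K₁ K₂ : Submodule ℂ E) [CompleteSpace K₁] [CompleteSpace K₂]
    (Q₁ Q₂ : E →L[ℂ] E)
    (hQ₁ : Q₁ = K₁.subtypeL ∘L K₁.orthogonalProjection)
    (hQ₂ : Q₂ = K₂.subtypeL ∘L K₂.orthogonalProjection)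
    (φ₁₂ φ₂₁ : ℝ)
    (hφ₁₂mem : φ₁₂ ∈ Set.Icc 0 (π / 2))
    (hφ₂₁mem : φ₂₁ ∈ Set.Icc 0 (π / 2))
    (hφ₁₂ : Real.sin φ₁₂ =
      sSup ((fun x => Metric.infDist x (K₂ : Set E)) '' {x : E | x ∈ K₁ ∧ ‖x‖ = 1}))
    (hφ₂₁ : Real.sin φ₂₁ =
      sSup ((fun y => Metric.infDist y (K₁ : Set E)) '' {y : E | y ∈ K₂ ∧ ‖y‖ = 1})) :
    Real.arcsin ‖Q₁ - Q₂‖ = max φ₁₂ φ₂₁ := by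
  have hIcc : Set.Icc 0 (π / 2) ⊆ Set.Icc (-(π / 2)) (π / 2) :=
    Set.Icc_subset_Icc (by linarith [pi_pos]) le_rfl
  obtain rfl : Q₁ = K₁.starProjection := hQ₁
  obtain rfl : Q₂ = K₂.starProjection := hQ₂
  rw [isStarProjection_starProjection.norm_sub_eq_max isStarProjection_starProjection,
    ← K₁.sSup_infDist_eq_norm_one_sub_starProjection_mul K₂, ← hφ₁₂,
    ← K₂.sSup_infDist_eq_norm_one_sub_starProjection_mul K₁, ← hφ₂₁,
    arcsin_max_sin (hIcc hφ₁₂mem) (hIcc hφ₂₁mem)]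

/-- The maximal angle arcsin ‖Q₁ − Q₂‖ between two nonzero subspaces equals the maximum of
the two relative maximal angles φ(𝔔₁,𝔔₂) and φ(𝔔₂,𝔔₁), where
sin φ(𝔔₁,𝔔₂) = sup over unit vectors x ∈ 𝔔₁ of dist(x, 𝔔₂). -/
theorem maximal_angle_eq_max_relative_angles {E : Type*} [NormedAddCommGroup E]
    [InnerProductSpace ℂ E] [CompleteSpace E]
    (K₁ K₂ : Submodule ℂ E) [CompleteSpace K₁] [CompleteSpace K₂]
    (hK₁ : K₁ ≠ ⊥) (hK₂ : K₂ ≠ ⊥)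
    (Q₁ Q₂ : E →L[ℂ] E)
    (hQ₁ : Q₁ = K₁.subtypeL ∘L K₁.orthogonalProjection)
    (hQ₂ : Q₂ = K₂.subtypeL ∘L K₂.orthogonalProjection)
    (φ₁₂ φ₂₁ : ℝ)
    (hφ₁₂mem : φ₁₂ ∈ Set.Icc 0 (π / 2))
    (hφ₂₁mem : φ₂₁ ∈ Set.Icc 0 (π / 2))
    (hφ₁₂ : Real.sin φ₁₂ =
      sSup ((fun x => Metric.infDist x (K₂ : Set E)) '' {x : E | x ∈ K₁ ∧ ‖x‖ = 1}))
    (hφ₂₁ : Real.sin φ₂₁ =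
      sSup ((fun y => Metric.infDist y (K₁ : Set E)) '' {y : E | y ∈ K₂ ∧ ‖y‖ = 1})) :
    Real.arcsin ‖Q₁ - Q₂‖ = max φ₁₂ φ₂₁ :=
  maximal_angle_eq_max_relative_angles_general K₁ K₂ Q₁ Q₂ hQ₁ hQ₂ φ₁₂ φ₂₁ hφ₁₂mem hφ₂₁mem hφ₁₂ hφ₂₁
end

section
/- For a piecewise continuously differentiable path t ↦ Q(t) of orthogonal projections on a Hilbert space, the maximal angle between the initial and final subspaces satisfies arcsin(‖Q(0) − Q(t)‖) ≤ ∫₀ᵗ ‖Q̇(s)‖ ds. -/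
open Real ContinuousLinearMap

/-- `P` is an orthogonal projection: self-adjoint and idempotent. -/
def IsOrthogonalProjection {E : Type*} [NormedAddCommGroup E] [InnerProductSpace ℂ E]
    [CompleteSpace E] (P : E →L[ℂ] E) : Prop :=
  IsSelfAdjoint P ∧ P ∘L P = P

/-!
For `x ≠ 0`, the angle between `x` and the range of an orthogonal projection `R` is attained at
`R x` and equals `arcsin (‖x - R x‖ / ‖x‖)`. If `P x = x`, going through `Q x` and using the
triangle inequality for angles between vectors bounds this angle by
`arcsin ‖P - Q‖ + arcsin ‖Q - R‖`; taking sines bounds `‖(1 - R) P‖` and, symmetrically,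
`‖(1 - P) R‖`, and these two control `‖P - R‖`. So `arcsin ‖P - R‖` obeys the triangle inequality.

Along the path, `φ s = arcsin ‖Q 0 - Q s‖` therefore satisfies
`φ z - φ x ≤ arcsin ‖Q z - Q x‖`, and since `arcsin` has slope `1` at `0` the upper right Dini
derivative of `φ` is at most `‖Q' x‖`; integrating this differential inequality gives the bound.
-/

open Set Topology

namespace IsOrthogonalProjection

variable {E : Type*} [NormedAddCommGroup E] [InnerProductSpace ℂ E] [CompleteSpace E]
  {P Q R : E →L[ℂ] E}

lemma apply_apply (hP : IsOrthogonalProjection P) (x : E) : P (P x) = P x :=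
  congr($(hP.2) x)

lemma inner_apply_left (hP : IsOrthogonalProjection P) (x y : E) :
    inner ℂ (P x) y = inner ℂ x (P y) :=
  hP.1.isSymmetric x y

lemma inner_apply_sub_self (hP : IsOrthogonalProjection P) (x y : E) :
    inner ℂ (P x) (y - P y) = 0 := by
  rw [hP.inner_apply_left, map_sub, hP.apply_apply, sub_self, inner_zero_right]

lemma norm_apply_sq_add_norm_sub_apply_sq (hP : IsOrthogonalProjection P) (x : E) :
    ‖P x‖ ^ 2 + ‖x - P x‖ ^ 2 = ‖x‖ ^ 2 := by
  have := norm_add_sq_eq_norm_sq_add_norm_sq_of_inner_eq_zero _ _ (hP.inner_apply_sub_self x x)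
  rw [add_sub_cancel] at this
  linear_combination -this

lemma norm_sub_apply_le (hP : IsOrthogonalProjection P) (x : E) : ‖x - P x‖ ≤ ‖x‖ := by
  nlinarith [hP.norm_apply_sq_add_norm_sub_apply_sq x, norm_nonneg x, norm_nonneg (x - P x),
    sq_nonneg ‖P x‖]

lemma norm_apply_le (hP : IsOrthogonalProjection P) (x : E) : ‖P x‖ ≤ ‖x‖ := by
  nlinarith [hP.norm_apply_sq_add_norm_sub_apply_sq x, norm_nonneg x, norm_nonneg (P x),
    sq_nonneg ‖x - P x‖]

lemma norm_sub_apply_le_of_apply_eq (hR : IsOrthogonalProjection R) {x : E} (hx : Q x = x) :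
    ‖x - R x‖ ≤ ‖Q - R‖ * ‖x‖ :=
  calc ‖x - R x‖ = ‖(Q - R) x - R ((Q - R) x)‖ := by
        simp only [sub_apply, map_sub, hR.apply_apply, hx]; abel_nf
    _ ≤ ‖(Q - R) x‖ := hR.norm_sub_apply_le _
    _ ≤ ‖Q - R‖ * ‖x‖ := (Q - R).le_opNorm x

section Angle

-- Angles are those of the underlying real inner product space, `⟪x, y⟫_ℝ = re ⟪x, y⟫`.
attribute [local instance] InnerProductSpace.complexToReal

open InnerProductGeometry

lemma real_inner_apply_eq_norm_sq (hR : IsOrthogonalProjection R) (x : E) :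
    inner ℝ x (R x) = ‖R x‖ ^ 2 := by
  rw [real_inner_eq_re_inner ℂ, ← hR.apply_apply, ← hR.inner_apply_left, hR.apply_apply,
    inner_self_eq_norm_sq]

lemma angle_apply_eq_arccos (hR : IsOrthogonalProjection R) (x : E) :
    angle x (R x) = arccos (‖R x‖ / ‖x‖) := by
  rw [angle, hR.real_inner_apply_eq_norm_sq]
  rcases eq_or_ne ‖R x‖ 0 with h | h
  · simp [h]
  · rw [sq, mul_comm ‖x‖, mul_div_mul_left _ _ h]

lemma angle_apply_eq_arcsin (hR : IsOrthogonalProjection R) {x : E} (hx : x ≠ 0) :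
    angle x (R x) = arcsin (‖x - R x‖ / ‖x‖) := by
  have hx' : 0 < ‖x‖ := norm_pos_iff.2 hx
  rw [hR.angle_apply_eq_arccos, arccos_eq_arcsin (by positivity)]
  congr 1
  rw [← sqrt_sq (by positivity : 0 ≤ ‖x - R x‖ / ‖x‖)]
  congr 1
  field_simp
  linarith [hR.norm_apply_sq_add_norm_sub_apply_sq x]

lemma norm_sub_apply_eq_sin_angle_mul (hR : IsOrthogonalProjection R) (x : E) :
    ‖x - R x‖ = sin (angle x (R x)) * ‖x‖ := by
  rcases eq_or_ne x 0 with rfl | hx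
  · simp
  have hx' : 0 < ‖x‖ := norm_pos_iff.2 hx
  have h₀ : 0 ≤ ‖x - R x‖ / ‖x‖ := by positivity
  have h₁ : ‖x - R x‖ / ‖x‖ ≤ 1 := (div_le_one hx').2 (hR.norm_sub_apply_le x)
  rw [hR.angle_apply_eq_arcsin hx, sin_arcsin (by linarith) h₁]
  field_simp

lemma angle_apply_le_pi_div_two (hR : IsOrthogonalProjection R) (x : E) :
    angle x (R x) ≤ π / 2 := by
  rw [hR.angle_apply_eq_arccos, arccos_le_pi_div_two]
  positivity

lemma angle_apply_le_angle (hR : IsOrthogonalProjection R) (x : E) {w : E} (hw : R w = w) :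
    angle x (R x) ≤ angle x w := by
  rw [hR.angle_apply_eq_arccos, angle]
  refine arccos_le_arccos ?_
  have hinner : inner ℝ x w ≤ ‖R x‖ * ‖w‖ := by
    rw [real_inner_eq_re_inner ℂ, ← hw, ← hR.inner_apply_left, hw]
    exact (Complex.re_le_norm _).trans (norm_inner_le_norm _ _)
  calc inner ℝ x w / (‖x‖ * ‖w‖) ≤ ‖R x‖ * ‖w‖ / (‖x‖ * ‖w‖) := by gcongr
    _ ≤ ‖R x‖ / ‖x‖ := by
      rcases eq_or_ne ‖w‖ 0 with h | h
      · simp [h]; positivity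
      · rw [mul_div_mul_right _ _ h]

lemma angle_apply_le_arcsin_norm_sub (hR : IsOrthogonalProjection R) {x : E} (hx : Q x = x)
    (hx₀ : x ≠ 0) : angle x (R x) ≤ arcsin ‖Q - R‖ := by
  rw [hR.angle_apply_eq_arcsin hx₀]
  exact arcsin_le_arcsin
    ((div_le_iff₀ (norm_pos_iff.2 hx₀)).2 (hR.norm_sub_apply_le_of_apply_eq hx))

lemma angle_apply_le_arcsin_add (hQ : IsOrthogonalProjection Q) (hR : IsOrthogonalProjection R)
    {x : E} (hx : P x = x) (hx₀ : x ≠ 0) :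
    angle x (R x) ≤ arcsin ‖P - Q‖ + arcsin ‖Q - R‖ := by
  have hPQ : angle x (Q x) ≤ arcsin ‖P - Q‖ := hQ.angle_apply_le_arcsin_norm_sub hx hx₀
  rcases eq_or_ne (Q x) 0 with hQx | hQx
  · calc angle x (R x) ≤ π / 2 := hR.angle_apply_le_pi_div_two x
      _ = angle x (Q x) := by rw [hQx, angle_zero_right]
      _ ≤ arcsin ‖P - Q‖ + arcsin ‖Q - R‖ := by
        linarith [arcsin_nonneg.2 (norm_nonneg (Q - R))]
  · calc angle x (R x) ≤ angle x (R (Q x)) := hR.angle_apply_le_angle x (hR.apply_apply _)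
      _ ≤ angle x (Q x) + angle (Q x) (R (Q x)) := angle_le_angle_add_angle _ _ _
      _ ≤ arcsin ‖P - Q‖ + arcsin ‖Q - R‖ :=
        add_le_add hPQ (hR.angle_apply_le_arcsin_norm_sub (hQ.apply_apply x) hQx)

lemma norm_one_sub_comp_le_sin (hP : IsOrthogonalProjection P) (hQ : IsOrthogonalProjection Q)
    (hR : IsOrthogonalProjection R) (hS : arcsin ‖P - Q‖ + arcsin ‖Q - R‖ ≤ π / 2) :
    ‖(1 - R) ∘L P‖ ≤ sin (arcsin ‖P - Q‖ + arcsin ‖Q - R‖) := by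
  set S := arcsin ‖P - Q‖ + arcsin ‖Q - R‖
  have hS₀ : 0 ≤ S :=
    add_nonneg (arcsin_nonneg.2 (norm_nonneg _)) (arcsin_nonneg.2 (norm_nonneg _))
  have hsin : 0 ≤ sin S := sin_nonneg_of_nonneg_of_le_pi hS₀ (by linarith [pi_pos])
  refine opNorm_le_bound _ hsin fun x => ?_
  rcases eq_or_ne (P x) 0 with hPx | hPx
  · simp only [comp_apply, hPx, map_zero, norm_zero]
    exact mul_nonneg hsin (norm_nonneg x)
  have hangle : sin (angle (P x) (R (P x))) ≤ sin S :=
    sin_le_sin_of_le_of_le_pi_div_two (by linarith [angle_nonneg (P x) (R (P x))]) hS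
      (hQ.angle_apply_le_arcsin_add hR (hP.apply_apply x) hPx)
  calc ‖((1 - R) ∘L P) x‖ = sin (angle (P x) (R (P x))) * ‖P x‖ :=
        hR.norm_sub_apply_eq_sin_angle_mul (P x)
    _ ≤ sin S * ‖x‖ := mul_le_mul hangle (hP.norm_apply_le x) (norm_nonneg _) hsin

end Angle

lemma norm_sub_le_of_norm_one_sub_comp_le (hP : IsOrthogonalProjection P)
    (hR : IsOrthogonalProjection R) {s : ℝ} (h₁ : ‖(1 - R) ∘L P‖ ≤ s)
    (h₂ : ‖(1 - P) ∘L R‖ ≤ s) : ‖P - R‖ ≤ s := by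
  have hs : 0 ≤ s := (norm_nonneg _).trans h₁
  have hstar : ‖P ∘L (1 - R)‖ = ‖(1 - R) ∘L P‖ := by
    rw [← norm_star ((1 - R) ∘L P)]
    congr 1
    change P * (1 - R) = star ((1 - R) * P)
    rw [star_mul, hP.1.star_eq, ((IsSelfAdjoint.one _).sub hR.1).star_eq]
  refine opNorm_le_bound _ hs fun x => ?_
  have hA : ‖P (x - R x)‖ ≤ s * ‖x - R x‖ := calc
    ‖P (x - R x)‖ = ‖(P ∘L (1 - R)) (x - R x)‖ := by simp [hR.apply_apply]
    _ ≤ ‖P ∘L (1 - R)‖ * ‖x - R x‖ := le_opNorm _ _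
    _ ≤ s * ‖x - R x‖ := by rw [hstar]; gcongr
  have hB : ‖R x - P (R x)‖ ≤ s * ‖R x‖ := calc
    ‖R x - P (R x)‖ = ‖((1 - P) ∘L R) (R x)‖ := by simp [hR.apply_apply]
    _ ≤ ‖(1 - P) ∘L R‖ * ‖R x‖ := le_opNorm _ _
    _ ≤ s * ‖R x‖ := by gcongr
  have hPx : P ((P - R) x) = P (x - R x) := by simp [hP.apply_apply]
  have hPx' : ‖(P - R) x - P ((P - R) x)‖ = ‖R x - P (R x)‖ := by
    rw [← norm_neg]
    congr 1
    simp only [sub_apply, map_sub, hP.apply_apply]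
    abel
  have hsq : ‖(P - R) x‖ ^ 2 ≤ (s * ‖x‖) ^ 2 := by
    rw [← hP.norm_apply_sq_add_norm_sub_apply_sq, hPx', hPx, mul_pow,
      ← hR.norm_apply_sq_add_norm_sub_apply_sq x]
    nlinarith [norm_nonneg (P (x - R x)), norm_nonneg (R x - P (R x))]
  exact (pow_le_pow_iff_left₀ (norm_nonneg _) (by positivity) two_ne_zero).1 hsq

theorem arcsin_norm_sub_le_add (hP : IsOrthogonalProjection P) (hQ : IsOrthogonalProjection Q)
    (hR : IsOrthogonalProjection R) :
    arcsin ‖P - R‖ ≤ arcsin ‖P - Q‖ + arcsin ‖Q - R‖ := by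
  set S := arcsin ‖P - Q‖ + arcsin ‖Q - R‖
  have hS₀ : 0 ≤ S :=
    add_nonneg (arcsin_nonneg.2 (norm_nonneg _)) (arcsin_nonneg.2 (norm_nonneg _))
  rcases le_or_gt (π / 2) S with hS | hS
  · exact (arcsin_le_pi_div_two _).trans hS
  have hS' : arcsin ‖R - Q‖ + arcsin ‖Q - P‖ = S := by
    rw [norm_sub_rev R Q, norm_sub_rev Q P, add_comm]
  have h₁ := norm_one_sub_comp_le_sin hP hQ hR hS.le
  have h₂ := norm_one_sub_comp_le_sin hR hQ hP (hS'.trans_le hS.le)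
  rw [hS'] at h₂
  calc arcsin ‖P - R‖ ≤ arcsin (sin S) :=
        arcsin_le_arcsin (norm_sub_le_of_norm_one_sub_comp_le hP hR h₁ h₂)
    _ = S := arcsin_sin (by linarith [pi_pos]) hS.le

end IsOrthogonalProjection

lemma HasDerivAt.eventually_arcsin_norm_sub_lt {F : Type*} [NormedAddCommGroup F]
    [NormedSpace ℝ F] {f : ℝ → F} {f' : F} {x r : ℝ} (hf : HasDerivAt f f' x)
    (hr : ‖f'‖ < r) :
    ∀ᶠ z in 𝓝[>] x, arcsin ‖f z - f x‖ < r * (z - x) := by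
  obtain ⟨ρ, hfρ, hρr⟩ := exists_between hr
  have hg : HasDerivAt (fun z => arcsin (ρ * (z - x))) ρ x := by
    have h₁ : HasDerivAt (fun z => ρ * (z - x)) ρ x := by
      simpa using ((hasDerivAt_id x).sub_const x).const_mul ρ
    have h₂ : HasDerivAt arcsin 1 (ρ * (x - x)) := by
      simpa using hasDerivAt_arcsin (x := 0) (by norm_num) (by norm_num)
    simpa [Function.comp_def] using h₂.comp x h₁
  filter_upwards [hf.hasDerivWithinAt.limsup_norm_slope_le hfρ,
    hg.hasDerivWithinAt.limsup_slope_le' (lt_irrefl x) hρr, self_mem_nhdsWithin]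
    with z hfz hgz hz
  have hzx : 0 < z - x := sub_pos.2 hz
  rw [norm_of_nonneg hzx.le, inv_mul_lt_iff₀ hzx, mul_comm] at hfz
  rw [slope_def_field, sub_self, mul_zero, arcsin_zero, sub_zero, div_lt_iff₀ hzx] at hgz
  exact (arcsin_le_arcsin hfz.le).trans_lt hgz

theorem sub_le_integral_of_eventually_sub_lt {φ g : ℝ → ℝ} {a b : ℝ} (hab : a ≤ b)
    (hφ : ContinuousOn φ (Icc a b)) (hg : ContinuousOn g (Icc a b))
    (hlt : ∀ x ∈ Ico a b, ∀ r, g x < r → ∀ᶠ z in 𝓝[>] x, φ z - φ x < r * (z - x)) :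
    φ b - φ a ≤ ∫ s in a..b, g s := by
  set G := IccExtend hab ((Icc a b).domRestrict g)
  have hG : Continuous G := (continuousOn_iff_continuous_domRestrict.1 hg).Icc_extend'
  have hGg : ∀ s ∈ Icc a b, G s = g s := fun s hs => IccExtend_of_mem hab _ hs
  have hB : ∀ x, HasDerivAt (fun u => φ a + ∫ s in a..u, G s) (G x) x := fun x =>
    (hG.integral_hasStrictDerivAt a x).hasDerivAt.const_add _
  have hle := image_le_of_liminf_slope_right_le_deriv_boundary hφ (by simp)
    (fun x _ => (hB x).continuousAt.continuousWithinAt) (fun x _ => (hB x).hasDerivWithinAt)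
    ?_ (right_mem_Icc.2 hab)
  · rw [intervalIntegral.integral_congr fun s hs => hGg s (uIcc_of_le hab ▸ hs)] at hle
    linarith
  intro x hx r hr
  rw [hGg x (Ico_subset_Icc_self hx)] at hr
  refine (((hlt x hx r hr).and self_mem_nhdsWithin).mono fun z ⟨hz, hxz⟩ => ?_).frequently
  rw [slope_def_field, div_lt_iff₀ (sub_pos.2 hxz)]
  exact hz

/-- For a continuously differentiable path of orthogonal projections, the maximal angle
between initial and final subspaces is bounded by the length of the path:
arcsin ‖Q(0) − Q(t)‖ ≤ ∫₀ᵗ ‖Q̇(s)‖ ds. -/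
theorem maximal_angle_le_path_length {E : Type*} [NormedAddCommGroup E]
    [InnerProductSpace ℂ E] [CompleteSpace E]
    (Q Q' : ℝ → (E →L[ℂ] E)) (t : ℝ) (ht : 0 ≤ t)
    (hproj : ∀ s, IsOrthogonalProjection (Q s))
    (hderiv : ∀ s ∈ Set.Icc (0 : ℝ) t, HasDerivAt Q (Q' s) s)
    (hcont : ContinuousOn Q' (Set.Icc (0 : ℝ) t)) :
    Real.arcsin ‖Q 0 - Q t‖ ≤ ∫ s in (0 : ℝ)..t, ‖Q' s‖ := by
  have hQ : ContinuousOn Q (Icc 0 t) := fun s hs => (hderiv s hs).continuousAt.continuousWithinAt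
  have h := sub_le_integral_of_eventually_sub_lt (φ := fun s => arcsin ‖Q 0 - Q s‖) ht
    (continuous_arcsin.comp_continuousOn (continuousOn_const.sub hQ).norm) hcont.norm
    fun x hx r hr => ?_
  · simpa using h
  filter_upwards [(hderiv x (Ico_subset_Icc_self hx)).eventually_arcsin_norm_sub_lt hr] with z hz
  have htri := (hproj 0).arcsin_norm_sub_le_add (hproj x) (hproj z)
  rw [norm_sub_rev (Q x)] at htri
  linarith
end

section
/- For a bounded self-adjoint operator H and orthogonal projection P₀ with range 𝔓₀, one has ‖P₀ H P₀^⊥‖ ≤ ΔE_{𝔓₀}, where ΔE_{𝔓₀} = sup_{ψ∈𝔓₀, ‖ψ‖=1} (⟨H²ψ,ψ⟩ − ⟨Hψ,ψ⟩²)^{1/2}. -/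
/-!
Passing to the adjoint, `‖P₀ H P₀^⊥‖ = ‖P₀^⊥ H P₀‖`, so it suffices to bound `‖P₀^⊥ H u‖` for unit
vectors `u ∈ 𝔓₀`. Since `P₀^⊥ u = 0`, we have `P₀^⊥ H u = P₀^⊥ (H u - ⟨H u, u⟩ u)`, and the
contraction `P₀^⊥` brings this down to `‖H u - ⟨H u, u⟩ u‖`, which is exactly the energy dispersion
of `u` because `⟨H u, u⟩` is real.
-/

open Real ContinuousLinearMap
open RCLike Submodule
open scoped InnerProductSpace

section
variable {𝕜 E : Type*} [RCLike 𝕜] [NormedAddCommGroup E] [InnerProductSpace 𝕜 E]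

noncomputable def energyDispersion (T : E →L[𝕜] E) (ψ : E) : ℝ :=
  √(re ⟪T (T ψ), ψ⟫_𝕜 - re ⟪T ψ, ψ⟫_𝕜 ^ 2)

variable {T : E →L[𝕜] E}

theorem LinearMap.IsSymmetric.re_inner_apply_apply_self (hT : (T : E →ₗ[𝕜] E).IsSymmetric)
    (u : E) :
    re ⟪T (T u), u⟫_𝕜 = ‖T u‖ ^ 2 := by
  rw [show ⟪T (T u), u⟫_𝕜 = ⟪T u, T u⟫_𝕜 from hT (T u) u, inner_self_eq_norm_sq]

theorem norm_sub_re_inner_smul_sq (hT : (T : E →ₗ[𝕜] E).IsSymmetric) {u : E} (hu : ‖u‖ = 1) :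
    ‖T u - (re ⟪T u, u⟫_𝕜 : 𝕜) • u‖ ^ 2 = re ⟪T (T u), u⟫_𝕜 - re ⟪T u, u⟫_𝕜 ^ 2 := by
  have hreal : ((re ⟪T u, u⟫_𝕜 : ℝ) : 𝕜) = ⟪T u, u⟫_𝕜 := hT.coe_re_inner_apply_self u
  rw [norm_sub_sq (𝕜 := 𝕜), inner_smul_right, norm_smul, hu, hT.re_inner_apply_apply_self, ← hreal]
  simp only [mul_one, norm_ofReal, ← ofReal_mul, ofReal_re, sq_abs]
  ring

theorem energyDispersion_eq_norm (hT : (T : E →ₗ[𝕜] E).IsSymmetric) {u : E} (hu : ‖u‖ = 1) :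
    energyDispersion T u = ‖T u - (re ⟪T u, u⟫_𝕜 : 𝕜) • u‖ := by
  rw [energyDispersion, ← norm_sub_re_inner_smul_sq hT hu, Real.sqrt_sq (norm_nonneg _)]

theorem energyDispersion_le_opNorm (hT : (T : E →ₗ[𝕜] E).IsSymmetric) {u : E} (hu : ‖u‖ = 1) :
    energyDispersion T u ≤ ‖T‖ :=
  calc energyDispersion T u ≤ √(re ⟪T (T u), u⟫_𝕜) := Real.sqrt_le_sqrt (by nlinarith)
    _ = ‖T u‖ := by rw [hT.re_inner_apply_apply_self, Real.sqrt_sq (norm_nonneg _)]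
    _ ≤ ‖T‖ := by simpa [hu] using T.le_opNorm u

theorem Submodule.norm_starProjection_orthogonal_le {K : Submodule 𝕜 E}
    [K.HasOrthogonalProjection] (v : E) {k : E} (hk : k ∈ K) : ‖Kᗮ.starProjection v‖ ≤ ‖v - k‖ := by
  rw [← sub_zero (Kᗮ.starProjection v), ← starProjection_orthogonal_apply_eq_zero hk, ← map_sub]
  exact Kᗮ.norm_starProjection_apply_le _

variable {K : Submodule 𝕜 E} [K.HasOrthogonalProjection]

theorem norm_starProjection_orthogonal_apply_le_energyDispersion
    (hT : (T : E →ₗ[𝕜] E).IsSymmetric) {u : E} (huK : u ∈ K) (hu : ‖u‖ = 1) :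
    ‖Kᗮ.starProjection (T u)‖ ≤ energyDispersion T u := by
  rw [energyDispersion_eq_norm hT hu]
  exact norm_starProjection_orthogonal_le _ (K.smul_mem _ huK)

theorem norm_orthogonal_comp_comp_starProjection_le (hT : (T : E →ₗ[𝕜] E).IsSymmetric) {D : ℝ}
    (hD : 0 ≤ D) (h : ∀ u ∈ K, ‖u‖ = 1 → energyDispersion T u ≤ D) :
    ‖Kᗮ.starProjection ∘L T ∘L K.starProjection‖ ≤ D := by
  have hrestrict : ‖Kᗮ.starProjection ∘L T ∘L K.subtypeL‖ ≤ D :=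
    opNorm_le_of_unit_norm hD fun u hu ↦
      (norm_starProjection_orthogonal_apply_le_energyDispersion hT u.2 hu).trans (h u u.2 hu)
  calc ‖Kᗮ.starProjection ∘L T ∘L K.starProjection‖
      = ‖(Kᗮ.starProjection ∘L T ∘L K.subtypeL) ∘L K.orthogonalProjectionOnto‖ := rfl
    _ ≤ D * 1 := (opNorm_comp_le _ _).trans <|
        mul_le_mul hrestrict K.orthogonalProjectionOnto_norm_le (norm_nonneg _) hD
    _ = D := mul_one D

theorem norm_starProjection_comp_comp_orthogonal [CompleteSpace E] (hT : IsSelfAdjoint T) :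
    ‖K.starProjection ∘L T ∘L Kᗮ.starProjection‖ =
      ‖Kᗮ.starProjection ∘L T ∘L K.starProjection‖ := by
  rw [← LinearIsometryEquiv.norm_map adjoint, adjoint_comp, adjoint_comp, hT.adjoint_eq,
    (isSelfAdjoint_starProjection K).adjoint_eq, (isSelfAdjoint_starProjection Kᗮ).adjoint_eq,
    comp_assoc]

end

theorem VHP_le_max_dispersion_general {E : Type*} [NormedAddCommGroup E]
    [InnerProductSpace ℂ E] [CompleteSpace E]
    (H : E →L[ℂ] E) (hH : IsSelfAdjoint H)
    (K : Submodule ℂ E) [CompleteSpace K]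
    (P₀ : E →L[ℂ] E) (hP₀ : P₀ = K.subtypeL ∘L K.orthogonalProjectionOnto) :
    ‖P₀ ∘L H ∘L (1 - P₀)‖ ≤
      sSup ((fun ψ : E =>
          Real.sqrt ((inner ℂ (H (H ψ)) ψ : ℂ).re - ((inner ℂ (H ψ) ψ : ℂ).re) ^ 2)) ''
        {ψ : E | ψ ∈ K ∧ ‖ψ‖ = 1}) := by
  change _ ≤ sSup (energyDispersion H '' {ψ : E | ψ ∈ K ∧ ‖ψ‖ = 1})
  set S := energyDispersion H '' {ψ : E | ψ ∈ K ∧ ‖ψ‖ = 1}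
  have hsymm := hH.isSymmetric
  have hbdd : BddAbove S :=
    ⟨‖H‖, by rintro _ ⟨u, ⟨-, hu⟩, rfl⟩; exact energyDispersion_le_opNorm hsymm hu⟩
  have hnonneg : 0 ≤ sSup S :=
    Real.sSup_nonneg <| by rintro _ ⟨u, -, rfl⟩; exact Real.sqrt_nonneg _
  rw [show P₀ = K.starProjection from hP₀, ← starProjection_orthogonal',
    norm_starProjection_comp_comp_orthogonal hH]
  exact norm_orthogonal_comp_comp_starProjection_le hsymm hnonneg fun u huK hu ↦
    le_csSup hbdd ⟨u, ⟨huK, hu⟩, rfl⟩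

/-- ‖P₀ H P₀^⊥‖ is bounded by the maximal energy dispersion
ΔE = sup over unit ψ ∈ 𝔓₀ of (⟨H²ψ,ψ⟩ − ⟨Hψ,ψ⟩²)^{1/2}. -/
theorem VHP_le_max_dispersion {E : Type*} [NormedAddCommGroup E]
    [InnerProductSpace ℂ E] [CompleteSpace E]
    (H : E →L[ℂ] E) (hH : IsSelfAdjoint H)
    (K : Submodule ℂ E) [CompleteSpace K] (hK : K ≠ ⊥)
    (P₀ : E →L[ℂ] E) (hP₀ : P₀ = K.subtypeL ∘L K.orthogonalProjectionOnto) :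
    ‖P₀ ∘L H ∘L (1 - P₀)‖ ≤
      sSup ((fun ψ : E =>
          Real.sqrt ((inner ℂ (H (H ψ)) ψ : ℂ).re - ((inner ℂ (H ψ) ψ : ℂ).re) ^ 2)) ''
        {ψ : E | ψ ∈ K ∧ ‖ψ‖ = 1}) :=
  VHP_le_max_dispersion_general H hH K P₀ hP₀
end

section
/- Two-level optimality: in ℂ² with H = diag(E₁, E₂), E₁ ≠ E₂, and P₀ the projection onto the span of e = (e₁ + e₂)/√2, one has ‖P₀ − e^{−iHt} P₀ e^{iHt}‖ = |sin((E₂ − E₁)t/2)|; hence arcsin(‖P₀ − P(t)‖) = ‖P₀HP₀^⊥‖ t for 0 ≤ t ≤ π/|E₂ − E₁|, so the bound ϑ(P₀,P(t)) ≤ ‖P₀HP₀^⊥‖ t is attained with equality. -/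
/-!
In the eigenbasis of `H` the evolution only multiplies coordinates by the phases `e^{∓iE_k t}`,
and a direct computation shows that `P₀ − P(t)` sends `(x₀, x₁)` to
`½((1 − e^{iφ}) x₁, (1 − e^{−iφ}) x₀)` with `φ = (E₂ − E₁)t`. Since `|1 − e^{iφ}| = 2|sin(φ/2)|`,
this operator is `|sin(φ/2)|` times a unitary. On the other side, with `e₋ = (e₁ − e₂)/√2` one has
`1 − P₀ = |e₋⟩⟨e₋|`, so `P₀ H P₀^⊥ = ⟨e, H e₋⟩ |e⟩⟨e₋|` has norm `|⟨e, H e₋⟩| = |E₂ − E₁|/2`.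
For `0 ≤ t ≤ π/|E₂ − E₁|` the angle `φ/2` lies in `[−π/2, π/2]`, where `arcsin |sin θ| = |θ|`.
-/

open Real ContinuousLinearMap
open InnerProductSpace (rankOne)
open EuclideanSpace (single)

section
variable {𝕜 E : Type*} [RCLike 𝕜] [NormedAddCommGroup E] [NormedSpace 𝕜 E] [CompleteSpace E]

theorem NormedSpace.exp_apply_of_apply_eq_smul {A : E →L[𝕜] E} {c : 𝕜} {x : E}
    (h : A x = c • x) : exp A x = exp c • x := by
  have hpow (n : ℕ) : (A ^ n) x = c ^ n • x := by
    induction n with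
    | zero => simp
    | succ n ih => rw [pow_succ, mul_apply_eq_comp, h, map_smul, ih, smul_smul, ← pow_succ']
  refine ((exp_series_hasSum_exp' (𝕂 := 𝕜) A).mapL (apply 𝕜 E x)).unique ?_
  convert (exp_series_hasSum_exp' (𝕂 := 𝕜) c).smul_const x using 1
  ext n
  simp [hpow, smul_smul]

theorem EuclideanSpace.exp_apply_of_apply_single {ι : Type*} [Fintype ι] [DecidableEq ι]
    {A : EuclideanSpace 𝕜 ι →L[𝕜] EuclideanSpace 𝕜 ι} {c : ι → 𝕜}
    (hA : ∀ i, A (single i 1) = c i • single i 1) (x : EuclideanSpace 𝕜 ι) (j : ι) :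
    NormedSpace.exp A x j = NormedSpace.exp (c j) * x j := by
  conv_lhs => rw [← (EuclideanSpace.basisFun ι 𝕜).sum_repr x]
  simp [EuclideanSpace.basisFun_apply, NormedSpace.exp_apply_of_apply_eq_smul (hA _),
    Pi.single_apply, mul_comm]

end

theorem ContinuousLinearMap.opNorm_eq_of_norm_apply_eq_mul {𝕜 E F : Type*}
    [NontriviallyNormedField 𝕜] [NormedAddCommGroup E] [NormedSpace 𝕜 E] [Nontrivial E]
    [SeminormedAddCommGroup F] [NormedSpace 𝕜 F] {f : E →L[𝕜] F} {c : ℝ}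
    (h : ∀ x, ‖f x‖ = c * ‖x‖) : ‖f‖ = c := by
  obtain ⟨x, hx⟩ := exists_ne (0 : E)
  have hx' : 0 < ‖x‖ := norm_pos_iff.mpr hx
  have hc : 0 ≤ c := nonneg_of_mul_nonneg_left ((h x).symm ▸ norm_nonneg _) hx'
  refine le_antisymm (opNorm_le_bound f hc fun y => (h y).le) ?_
  exact le_of_mul_le_mul_right ((h x) ▸ f.le_opNorm x) hx'

theorem InnerProductSpace.norm_rankOne_comp_comp_rankOne {𝕜 E : Type*} [RCLike 𝕜]
    [NormedAddCommGroup E] [InnerProductSpace 𝕜 E] {e f : E} (he : ‖e‖ = 1) (hf : ‖f‖ = 1)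
    (T : E →L[𝕜] E) : ‖rankOne 𝕜 e e ∘L T ∘L rankOne 𝕜 f f‖ = ‖(inner 𝕜 e (T f) : 𝕜)‖ := by
  simp [comp_rankOne, norm_smul, he, hf]

theorem Complex.norm_one_sub_exp_ofReal_mul_I (θ : ℝ) :
    ‖1 - exp (θ * I)‖ = 2 * |Real.sin (θ / 2)| := by
  rw [norm_sub_rev, mul_comm, norm_exp_I_mul_ofReal_sub_one, norm_mul, Real.norm_eq_abs]
  norm_num

theorem Complex.exp_mul_exp_neg (z : ℂ) : exp z * exp (-z) = 1 := by
  rw [exp_neg, mul_inv_cancel₀ (exp_ne_zero z)]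

theorem Real.arcsin_abs_sin {x : ℝ} (hx : |x| ≤ π / 2) : arcsin |sin x| = |x| := by
  rw [abs_sin_eq_sin_abs_of_abs_le_pi (by linarith [pi_pos]),
    arcsin_sin (by linarith [abs_nonneg x, pi_pos]) hx]

local notation "ℂ²" => EuclideanSpace ℂ (Fin 2)
local notation "e₊" => ((√2 : ℝ) : ℂ)⁻¹ • (single 0 1 + single 1 1 : ℂ²)
local notation "e₋" => ((√2 : ℝ) : ℂ)⁻¹ • (single 0 1 - single 1 1 : ℂ²)

namespace TwoLevel

theorem ofReal_sqrt_two_inv_sq : ((√2 : ℝ) : ℂ)⁻¹ ^ 2 = 2⁻¹ := by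
  rw [inv_pow, ← Complex.ofReal_pow, sq_sqrt zero_le_two]
  norm_num

theorem norm_inv_sqrt_two_smul_single_add_single : ‖e₊‖ = 1 := by
  simp [EuclideanSpace.norm_eq, Fin.sum_univ_two]
  norm_num

theorem norm_inv_sqrt_two_smul_single_sub_single : ‖e₋‖ = 1 := by
  simp [EuclideanSpace.norm_eq, Fin.sum_univ_two]
  norm_num

theorem one_sub_rankOne_inv_sqrt_two_smul_single_add_single :
    1 - rankOne ℂ e₊ e₊ = rankOne ℂ e₋ e₋ := by
  ext x j
  fin_cases j
  · simp [EuclideanSpace.inner_single_left]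
    linear_combination (-2 * x 0) * ofReal_sqrt_two_inv_sq
  · simp [EuclideanSpace.inner_single_left]
    linear_combination (-2 * x 1) * ofReal_sqrt_two_inv_sq

variable {E₁ E₂ : ℝ} {H : ℂ² →L[ℂ] ℂ²}

theorem norm_rankOne_comp_comp_one_sub_rankOne
    (hH : ∀ i, H (single i 1) = ![(E₁ : ℂ), E₂] i • single i 1) :
    ‖rankOne ℂ e₊ e₊ ∘L H ∘L (1 - rankOne ℂ e₊ e₊)‖ = |E₂ - E₁| / 2 := by
  have hinner : inner ℂ e₊ (H e₋) = ((E₁ - E₂) / 2 : ℝ) := by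
    simp [hH, EuclideanSpace.inner_single_left]
    linear_combination ((E₁ : ℂ) - E₂) * ofReal_sqrt_two_inv_sq
  rw [one_sub_rankOne_inv_sqrt_two_smul_single_add_single,
    InnerProductSpace.norm_rankOne_comp_comp_rankOne norm_inv_sqrt_two_smul_single_add_single
      norm_inv_sqrt_two_smul_single_sub_single,
    hinner, Complex.norm_real, Real.norm_eq_abs, abs_div, abs_sub_comm, abs_two]

theorem exp_smul_apply (hH : ∀ i, H (single i 1) = ![(E₁ : ℂ), E₂] i • single i 1)
    (z : ℂ) (x : ℂ²) (j : Fin 2) :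
    NormedSpace.exp (z • H) x j = Complex.exp (z * ![(E₁ : ℂ), E₂] j) * x j := by
  rw [Complex.exp_eq_exp_ℂ]
  refine EuclideanSpace.exp_apply_of_apply_single (c := fun i => z * ![(E₁ : ℂ), E₂] i)
    (fun i => ?_) x j
  rw [smul_apply, hH, smul_smul]

theorem rankOne_sub_conj_exp_apply_zero
    (hH : ∀ i, H (single i 1) = ![(E₁ : ℂ), E₂] i • single i 1) (t : ℝ) (x : ℂ²) :
    (rankOne ℂ e₊ e₊ - NormedSpace.exp ((-(Complex.I * t)) • H) ∘L rankOne ℂ e₊ e₊ ∘L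
      NormedSpace.exp ((Complex.I * t) • H)) x 0
      = (1 - Complex.exp (((E₂ - E₁) * t : ℝ) * Complex.I)) / 2 * x 1 := by
  have hphase : Complex.exp (Complex.I * t * E₂) * Complex.exp (-(Complex.I * t * E₁))
      = Complex.exp (((E₂ : ℂ) - E₁) * t * Complex.I) := by
    rw [← Complex.exp_add]; ring_nf
  simp [EuclideanSpace.inner_single_left, exp_smul_apply hH]
  linear_combination (-((√2 : ℝ) : ℂ)⁻¹ ^ 2 * x 0) * Complex.exp_mul_exp_neg (Complex.I * t * E₁)
    + (-((√2 : ℝ) : ℂ)⁻¹ ^ 2 * x 1) * hphase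
    + (x 1 * (1 - Complex.exp (((E₂ : ℂ) - E₁) * t * Complex.I))) * ofReal_sqrt_two_inv_sq

theorem rankOne_sub_conj_exp_apply_one
    (hH : ∀ i, H (single i 1) = ![(E₁ : ℂ), E₂] i • single i 1) (t : ℝ) (x : ℂ²) :
    (rankOne ℂ e₊ e₊ - NormedSpace.exp ((-(Complex.I * t)) • H) ∘L rankOne ℂ e₊ e₊ ∘L
      NormedSpace.exp ((Complex.I * t) • H)) x 1
      = (1 - Complex.exp (((E₁ - E₂) * t : ℝ) * Complex.I)) / 2 * x 0 := by
  have hphase : Complex.exp (Complex.I * t * E₁) * Complex.exp (-(Complex.I * t * E₂))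
      = Complex.exp (((E₁ : ℂ) - E₂) * t * Complex.I) := by
    rw [← Complex.exp_add]; ring_nf
  simp [EuclideanSpace.inner_single_left, exp_smul_apply hH]
  linear_combination (-((√2 : ℝ) : ℂ)⁻¹ ^ 2 * x 1) * Complex.exp_mul_exp_neg (Complex.I * t * E₂)
    + (-((√2 : ℝ) : ℂ)⁻¹ ^ 2 * x 0) * hphase
    + (x 0 * (1 - Complex.exp (((E₁ : ℂ) - E₂) * t * Complex.I))) * ofReal_sqrt_two_inv_sq

theorem norm_rankOne_sub_conj_exp_apply
    (hH : ∀ i, H (single i 1) = ![(E₁ : ℂ), E₂] i • single i 1) (t : ℝ) (x : ℂ²) :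
    ‖(rankOne ℂ e₊ e₊ - NormedSpace.exp ((-(Complex.I * t)) • H) ∘L rankOne ℂ e₊ e₊ ∘L
      NormedSpace.exp ((Complex.I * t) • H)) x‖ = |Real.sin ((E₂ - E₁) * t / 2)| * ‖x‖ := by
  have h₀ := rankOne_sub_conj_exp_apply_zero hH t x
  have h₁ := rankOne_sub_conj_exp_apply_one hH t x
  have hsin : Real.sin ((E₁ - E₂) * t / 2) = -Real.sin ((E₂ - E₁) * t / 2) := by
    rw [← Real.sin_neg]; ring_nf
  rw [EuclideanSpace.norm_eq, EuclideanSpace.norm_eq, Fin.sum_univ_two, Fin.sum_univ_two, h₀, h₁,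
    norm_mul, norm_mul, norm_div, norm_div, Complex.norm_one_sub_exp_ofReal_mul_I,
    Complex.norm_one_sub_exp_ofReal_mul_I, hsin, abs_neg, Complex.norm_two]
  conv_rhs => rw [← sqrt_sq (abs_nonneg (Real.sin _)), ← sqrt_mul (sq_nonneg _)]
  congr 1
  ring

end TwoLevel

/-- Two-level optimality: in ℂ², with H = diag(E₁,E₂), E₁ ≠ E₂, and P₀ the projection onto
the span of e = (e₁+e₂)/√2, one has ‖P₀ − P(t)‖ = |sin((E₂−E₁)t/2)|; consequently
arcsin ‖P₀ − P(t)‖ = ‖P₀ H P₀^⊥‖ · t for 0 ≤ t ≤ π/|E₂−E₁|. -/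
theorem two_level_optimality
    (E₁ E₂ : ℝ) (hE : E₁ ≠ E₂)
    (e₁ e₂ e : EuclideanSpace ℂ (Fin 2))
    (he₁ : e₁ = EuclideanSpace.single 0 1) (he₂ : e₂ = EuclideanSpace.single 1 1)
    (he : e = ((Real.sqrt 2 : ℂ))⁻¹ • (e₁ + e₂))
    (H P₀ : EuclideanSpace ℂ (Fin 2) →L[ℂ] EuclideanSpace ℂ (Fin 2))
    (hH : ∀ x, H x = ((E₁ : ℂ) * inner ℂ e₁ x) • e₁ + ((E₂ : ℂ) * inner ℂ e₂ x) • e₂)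
    (hP₀ : ∀ x, P₀ x = (inner ℂ e x : ℂ) • e)
    (P : ℝ → (EuclideanSpace ℂ (Fin 2) →L[ℂ] EuclideanSpace ℂ (Fin 2)))
    (hP : ∀ t : ℝ, P t =
      NormedSpace.exp ((-(Complex.I * t)) • H) ∘L P₀ ∘L NormedSpace.exp ((Complex.I * t) • H)) :
    (∀ t : ℝ, ‖P₀ - P t‖ = |Real.sin ((E₂ - E₁) * t / 2)|) ∧
    (∀ t : ℝ, 0 ≤ t → t ≤ Real.pi / |E₂ - E₁| →
      Real.arcsin ‖P₀ - P t‖ = ‖P₀ ∘L H ∘L (1 - P₀)‖ * t) := by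
  subst he₁ he₂ he
  have hdiag : ∀ i, H (single i 1) = ![(E₁ : ℂ), E₂] i • single i 1 := by
    intro i
    fin_cases i <;> ext j <;> fin_cases j <;> simp [hH, EuclideanSpace.inner_single_left]
  have hP₀' : P₀ = rankOne ℂ e₊ e₊ := ContinuousLinearMap.ext hP₀
  have hnorm (t : ℝ) : ‖P₀ - P t‖ = |Real.sin ((E₂ - E₁) * t / 2)| := by
    rw [hP t, hP₀']
    exact opNorm_eq_of_norm_apply_eq_mul (TwoLevel.norm_rankOne_sub_conj_exp_apply hdiag t)
  refine ⟨hnorm, fun t ht₀ htπ => ?_⟩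
  have hangle : |(E₂ - E₁) * t / 2| = |E₂ - E₁| / 2 * t := by
    rw [abs_div, abs_mul, abs_of_nonneg ht₀, abs_two]
    ring
  have hgap : 0 < |E₂ - E₁| := abs_pos.mpr (sub_ne_zero.mpr hE.symm)
  have hbound : |(E₂ - E₁) * t / 2| ≤ π / 2 := by
    rw [hangle]
    linarith [(le_div_iff₀ hgap).mp htπ]
  rw [hnorm, hP₀', TwoLevel.norm_rankOne_comp_comp_one_sub_rankOne hdiag, arcsin_abs_sin hbound,
    hangle]
end
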